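/- arXiv:1407.6517 — 12 statements merged into one kernel-verified Lean document; each statement's English description precedes it below -/
import Mathlib

section
/- If X is a connected and locally connected topological space and U is an open subset of X such that for every open connected set A ⊆ U the closure of A is contained in U, then U = ∅ or U = X. -/
theorem stmt0 {X : Type*} [TopologicalSpace X] [ConnectedSpace X] [LocallyConnectedSpace X]
    (U : Set X) (hU : IsOpen U)
    (hG : ∀ A : Set X, IsOpen A → IsConnected A → A ⊆ U → closure A ⊆ U) :
    U = ∅ ∨ U = Set.univ := by
  rcases U.eq_empty_or_nonempty with h | ⟨x, hx⟩
  · exact Or.inl h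
  right
  set C := connectedComponentIn U x with hC
  have hCo : IsOpen C := hU.connectedComponentIn
  have hCc : IsConnected C := (isConnected_connectedComponentIn_iff).2 hx
  have hCU : C ⊆ U := connectedComponentIn_subset U x
  have hcl : closure C ⊆ U := hG C hCo hCc hCU
  have hclC : closure C ⊆ C := by
    apply IsPreconnected.subset_connectedComponentIn (hCc.isPreconnected.closure)
    · exact subset_closure (mem_connectedComponentIn hx)
    · exact hcl
  have hclosed : IsClosed C := isClosed_of_closure_subset hclC
  have : C = Set.univ := (IsClopen.eq_univ ⟨hclosed, hCo⟩ hCc.nonempty)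
  exact Set.eq_univ_of_univ_subset (this ▸ hCU)
end

section
/- Let X be a hereditarily Baire, connected, locally connected topological space. Suppose X = X₁ ∪ X₂ where X₁ and X₂ are disjoint subsets that are simultaneously Fσ and Gδ, and each Xᵢ is G-closed (for every open connected set A ⊆ Xᵢ, the closure of A is contained in Xᵢ). Then X₁ = X or X₂ = X. -/
/-- A set is Fσ if it is a countable union of closed sets. -/
def IsFsigma {X : Type*} [TopologicalSpace X] (s : Set X) : Prop :=
  ∃ F : ℕ → Set X, (∀ n, IsClosed (F n)) ∧ s = ⋃ n, F n

open Set

lemma core_aux {X : Type*} [TopologicalSpace X] [LocallyConnectedSpace X]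
    (X1 X2 : Set X) (hc : X2 = X1ᶜ)
    (hGc2 : ∀ A : Set X, IsOpen A → IsConnected A → A ⊆ X2 → closure A ⊆ X2)
    (U : Set X) (hU : IsOpen U) (x : X) (hxU : x ∈ U)
    (hx1 : x ∈ closure X1) (hx2 : x ∈ closure X2)
    (hsub : U ∩ (closure X1 ∩ closure X2) ⊆ X1) : False := by
  set F : Set X := closure X1 ∩ closure X2 with hFdef
  have hFc : IsClosed F := isClosed_closure.inter isClosed_closure
  -- get a connected open neighborhood V ⊆ U
  obtain ⟨V, ⟨hVo, hxV, hVconn⟩, hVU⟩ :=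
    (LocallyConnectedSpace.open_connected_basis x).mem_iff.mp (hU.mem_nhds hxU)
  have hxX1 : x ∈ X1 := hsub ⟨hxU, hx1, hx2⟩
  -- interior X1ᶜ and interior X2ᶜ facts
  have hcompl1 : (closure X1)ᶜ = interior X2 := by
    rw [hc, ← interior_compl]
  have hcompl2 : (closure X2)ᶜ = interior X1 := by
    rw [hc, closure_compl, compl_compl]
  have hdisj12 : Disjoint X1 X2 := by rw [hc]; exact disjoint_compl_right
  -- claim: V ∩ interior X2 = ∅
  have hV2 : V ∩ interior X2 = ∅ := by
    by_contra hne
    obtain ⟨w, hwV, hwi⟩ := Set.nonempty_iff_ne_empty.mpr hne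
    have hwF : w ∉ F := by
      intro hwF
      have : w ∉ closure X1 := by
        rw [← hcompl1] at hwi; exact hwi
      exact this hwF.1
    have hVFopen : IsOpen (V \ F) := hVo.sdiff hFc
    have hwVF : w ∈ V \ F := ⟨hwV, hwF⟩
    set C : Set X := connectedComponentIn (V \ F) w with hCdef
    have hCo : IsOpen C := hVFopen.connectedComponentIn
    have hCconn : IsConnected C := isConnected_connectedComponentIn_iff.mpr hwVF
    have hwC : w ∈ C := mem_connectedComponentIn hwVF
    have hCsub : C ⊆ V \ F := connectedComponentIn_subset _ _
    -- C ⊆ interior X2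
    have hCi2 : C ⊆ interior X2 := by
      apply hCconn.isPreconnected.subset_left_of_subset_union isOpen_interior isOpen_interior
      · exact Set.disjoint_of_subset interior_subset interior_subset hdisj12.symm
      · intro z hz
        have hzF : z ∉ F := (hCsub hz).2
        rcases Classical.em (z ∈ closure X1) with h1 | h1
        · rcases Classical.em (z ∈ closure X2) with h2 | h2
          · exact absurd ⟨h1, h2⟩ hzF
          · exact Or.inr (by rw [← hcompl2]; exact h2)
        · exact Or.inl (by rw [← hcompl1]; exact h1)
      · exact ⟨w, hwC, hwi⟩
    have hclC2 : closure C ⊆ X2 :=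
      hGc2 C hCo hCconn (hCi2.trans interior_subset)
    -- find a boundary point of C inside V
    have hxnotC : x ∉ closure C := fun h => (by rw [hc] at hclC2; exact hclC2 h hxX1)
    have : ¬ (V ∩ closure C ⊆ C) := by
      intro hVC
      have hVsubC : V ⊆ C := by
        apply hVconn.isPreconnected.subset_left_of_subset_union hCo
          isClosed_closure.isOpen_compl
        · exact Set.disjoint_compl_right_iff_subset.mpr subset_closure
        · intro z hz
          rcases Classical.em (z ∈ closure C) with h | h
          · exact Or.inl (hVC ⟨hz, h⟩)
          · exact Or.inr h
        · exact ⟨w, hwV, hwC⟩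
      exact (hCsub (hVsubC hxV)).2 ⟨hx1, hx2⟩
    rw [Set.not_subset] at this
    obtain ⟨y, ⟨hyV, hyclC⟩, hyC⟩ := this
    -- y must be in F
    have hyF : y ∈ F := by
      by_contra hyF
      -- then y ∈ V \ F, and y ∈ closure C implies y ∈ C
      have hyVF : y ∈ V \ F := ⟨hyV, hyF⟩
      set D : Set X := connectedComponentIn (V \ F) y with hDdef
      have hDo : IsOpen D := hVFopen.connectedComponentIn
      have hyD : y ∈ D := mem_connectedComponentIn hyVF
      obtain ⟨p, hpD, hpC⟩ := mem_closure_iff.mp hyclC D hDo hyD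
      have h1 := connectedComponentIn_eq (show p ∈ connectedComponentIn (V \ F) y from hpD)
      have h2 := connectedComponentIn_eq (show p ∈ connectedComponentIn (V \ F) w from hpC)
      refine hyC ?_
      show y ∈ connectedComponentIn (V \ F) w
      rw [h2, ← h1]
      exact mem_connectedComponentIn hyVF
    have hyX1 : y ∈ X1 := hsub ⟨hVU hyV, hyF⟩
    have hyX2 : y ∈ X2 := hclC2 hyclC
    rw [hc] at hyX2; exact hyX2 hyX1
  -- V ⊆ X1
  have hVX1 : V ⊆ X1 := by
    intro z hzV
    rcases Classical.em (z ∈ closure X1) with h1 | h1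
    · rcases Classical.em (z ∈ closure X2) with h2 | h2
      · exact hsub ⟨hVU hzV, h1, h2⟩
      · have h2' : z ∈ (closure X2)ᶜ := h2
        rw [hcompl2] at h2'; exact interior_subset h2'
    · have h1' : z ∈ (closure X1)ᶜ := h1
      rw [hcompl1] at h1'
      exact absurd (Set.eq_empty_iff_forall_notMem.mp hV2 z ⟨hzV, h1'⟩) not_false
  -- contradiction: x ∈ closure X2 and V ⊆ X1
  obtain ⟨p, hpV, hpX2⟩ := mem_closure_iff.mp hx2 V hVo hxV
  rw [hc] at hpX2; exact hpX2 (hVX1 hpV)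

theorem stmt2 {X : Type*} [TopologicalSpace X] [ConnectedSpace X] [LocallyConnectedSpace X]
    (hBaire : ∀ F : Set X, IsClosed F → BaireSpace F)
    (X1 X2 : Set X)
    (hF1 : IsFsigma X1) (hG1 : IsGδ X1) (hF2 : IsFsigma X2) (hG2 : IsGδ X2)
    (hdisj : Disjoint X1 X2) (hunion : X1 ∪ X2 = Set.univ)
    (hGc1 : ∀ A : Set X, IsOpen A → IsConnected A → A ⊆ X1 → closure A ⊆ X1)
    (hGc2 : ∀ A : Set X, IsOpen A → IsConnected A → A ⊆ X2 → closure A ⊆ X2) :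
    X1 = Set.univ ∨ X2 = Set.univ := by
  have hc2 : X2 = X1ᶜ := by
    ext z
    constructor
    · intro h hz; exact hdisj.ne_of_mem hz h rfl
    · intro h
      have : z ∈ X1 ∪ X2 := hunion ▸ Set.mem_univ z
      rcases this with h1 | h2
      · exact absurd h1 h
      · exact h2
  have hc1 : X1 = X2ᶜ := by rw [hc2, compl_compl]
  set F : Set X := closure X1 ∩ closure X2 with hFdef
  have hFc : IsClosed F := isClosed_closure.inter isClosed_closure
  rcases Classical.em (F = ∅) with hF | hF
  · -- X1 is clopen
    have hX1closed : IsClosed X1 := by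
      rw [← closure_subset_iff_isClosed]
      intro z hz
      rcases (hunion ▸ Set.mem_univ z : z ∈ X1 ∪ X2) with h1 | h2
      · exact h1
      · exact absurd (Set.eq_empty_iff_forall_notMem.mp hF z ⟨hz, subset_closure h2⟩) not_false
    have hX2closed : IsClosed X2 := by
      rw [← closure_subset_iff_isClosed]
      intro z hz
      rcases (hunion ▸ Set.mem_univ z : z ∈ X1 ∪ X2) with h1 | h2
      · exact absurd (Set.eq_empty_iff_forall_notMem.mp hF z ⟨subset_closure h1, hz⟩) not_false
      · exact h2
    have hX1clopen : IsClopen X1 := ⟨hX1closed, by rw [hc1]; exact hX2closed.isOpen_compl⟩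
    rcases isClopen_iff.mp hX1clopen with h | h
    · right
      rw [hc2, h, Set.compl_empty]
    · exact Or.inl h
  · -- F nonempty: Baire category argument
    exfalso
    have hFne : F.Nonempty := Set.nonempty_iff_ne_empty.mpr hF
    haveI : Nonempty F := hFne.to_subtype
    haveI : BaireSpace F := hBaire F hFc
    obtain ⟨F1, hF1c, hF1e⟩ := hF1
    obtain ⟨F2, hF2c, hF2e⟩ := hF2
    set g : ℕ ⊕ ℕ → Set F := Sum.elim (fun n => Subtype.val ⁻¹' F1 n)
      (fun n => Subtype.val ⁻¹' F2 n) with hgdef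
    have hgc : ∀ i, IsClosed (g i) := by
      rintro (n | n)
      · exact (hF1c n).preimage continuous_subtype_val
      · exact (hF2c n).preimage continuous_subtype_val
    have hgU : ⋃ i, g i = Set.univ := by
      ext ⟨z, hz⟩
      simp only [Set.mem_iUnion, Set.mem_univ, iff_true]
      rcases (hunion ▸ Set.mem_univ z : z ∈ X1 ∪ X2) with h1 | h2
      · rw [hF1e] at h1
        obtain ⟨n, hn⟩ := Set.mem_iUnion.mp h1
        exact ⟨Sum.inl n, hn⟩
      · rw [hF2e] at h2
        obtain ⟨n, hn⟩ := Set.mem_iUnion.mp h2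
        exact ⟨Sum.inr n, hn⟩
    obtain ⟨i, ⟨y, hy⟩⟩ := nonempty_interior_of_iUnion_of_closed hgc hgU
    have hynhds : g i ∈ nhds y := mem_interior_iff_mem_nhds.mp hy
    obtain ⟨u, hu, husub⟩ := (mem_nhds_subtype F y (g i)).mp hynhds
    obtain ⟨U, hUu, hUo, hyU⟩ := mem_nhds_iff.mp hu
    have hyF : (y : X) ∈ F := y.2
    cases i with
    | inl n =>
        refine core_aux X1 X2 hc2 hGc2 U hUo y hyU hyF.1 hyF.2 ?_
        intro z ⟨hzU, hzF⟩
        have : (⟨z, hzF⟩ : F) ∈ Subtype.val ⁻¹' F1 n := husub (hUu hzU)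
        rw [hF1e]; exact Set.mem_iUnion.mpr ⟨n, this⟩
    | inr n =>
        refine core_aux X2 X1 hc1 hGc1 U hUo y hyU hyF.2 hyF.1 ?_
        intro z ⟨hzU, hzF⟩
        have hzF' : z ∈ F := ⟨hzF.2, hzF.1⟩
        have : (⟨z, hzF'⟩ : F) ∈ Subtype.val ⁻¹' F2 n := husub (hUu hzU)
        rw [hF2e]; exact Set.mem_iUnion.mpr ⟨n, this⟩
end

section
/- Suppose ℝⁿ = X₁ ∪ X₂ where X₁ and X₂ are disjoint subsets that are simultaneously Fσ and Gδ, and each Xᵢ is W-closed, meaning that for every open convex set A ⊆ Xᵢ the closure of A is contained in Xᵢ. Then X₁ = ℝⁿ or X₂ = ℝⁿ. -/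
/-- Key lemma: if a ball around a common boundary point meets the boundary only
inside `X1`, and `X2` is W-closed, we get a contradiction. -/
lemma key_lemma {E : Type*} [NormedAddCommGroup E] [NormedSpace ℝ E] [ProperSpace E]
    (X1 X2 : Set E) (hdisj : Disjoint X1 X2) (hunion : X1 ∪ X2 = Set.univ)
    (hW2 : ∀ A : Set E, IsOpen A → Convex ℝ A → A ⊆ X2 → closure A ⊆ X2)
    (x : E) (ε : ℝ) (hε : 0 < ε) (hx : x ∈ closure X1 ∩ closure X2)
    (hsub : Metric.ball x ε ∩ (closure X1 ∩ closure X2) ⊆ X1) : False := by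
  have hxX1 : x ∈ X1 := hsub ⟨Metric.mem_ball_self hε, hx⟩
  -- find y ∈ X2 close to x
  obtain ⟨y, hyX2, hyx⟩ := Metric.mem_closure_iff.mp hx.2 (ε / 3) (by linarith)
  have hyx' : dist y x < ε / 3 := by rwa [dist_comm]
  have hyne : y ∉ closure X1 := by
    intro hy
    have hyS : y ∈ Metric.ball x ε ∩ (closure X1 ∩ closure X2) :=
      ⟨by simp [Metric.mem_ball]; linarith [hyx'], hy, subset_closure hyX2⟩
    exact hdisj.ne_of_mem (hsub hyS) hyX2 rfl
  have hne : (closure X1).Nonempty := ⟨x, hx.1⟩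
  set r := Metric.infDist y (closure X1) with hr
  have hrpos : 0 < r :=
    (isClosed_closure.notMem_iff_infDist_pos hne).mp hyne
  have hball : Metric.ball y r ⊆ X2 := by
    intro z hz
    have hz1 : z ∉ closure X1 := fun hz1 =>
      absurd (Metric.infDist_le_dist_of_mem hz1) (by rw [dist_comm]; exact not_le.mpr hz)
    have : z ∈ X1 ∪ X2 := hunion ▸ Set.mem_univ z
    rcases this with h | h
    · exact absurd (subset_closure h) hz1
    · exact h
  have hcball : Metric.closedBall y r ⊆ X2 := by
    have := hW2 (Metric.ball y r) Metric.isOpen_ball (convex_ball y r) hball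
    rwa [closure_ball y (ne_of_gt hrpos)] at this
  obtain ⟨w, hw1, hwdist⟩ := isClosed_closure.exists_infDist_eq_dist hne y
  have hwX2 : w ∈ X2 := hcball (by rw [Metric.mem_closedBall, dist_comm, ← hwdist])
  have hrle : r ≤ dist y x := Metric.infDist_le_dist_of_mem hx.1
  have hwball : w ∈ Metric.ball x ε := by
    rw [Metric.mem_ball]
    calc dist w x ≤ dist w y + dist y x := dist_triangle w y x
    _ = r + dist y x := by rw [dist_comm, ← hwdist]
    _ ≤ dist y x + dist y x := by linarith
    _ < ε := by linarith
  have hwX1 : w ∈ X1 := hsub ⟨hwball, hw1, subset_closure hwX2⟩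
  exact hdisj.ne_of_mem hwX1 hwX2 rfl

theorem stmt3 {n : ℕ} (X1 X2 : Set (EuclideanSpace ℝ (Fin n)))
    (hF1 : IsFsigma X1) (hG1 : IsGδ X1) (hF2 : IsFsigma X2) (hG2 : IsGδ X2)
    (hdisj : Disjoint X1 X2) (hunion : X1 ∪ X2 = Set.univ)
    (hW1 : ∀ A : Set (EuclideanSpace ℝ (Fin n)), IsOpen A → Convex ℝ A → A ⊆ X1 → closure A ⊆ X1)
    (hW2 : ∀ A : Set (EuclideanSpace ℝ (Fin n)), IsOpen A → Convex ℝ A → A ⊆ X2 → closure A ⊆ X2) :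
    X1 = Set.univ ∨ X2 = Set.univ := by
  obtain ⟨F, hFc, hFeq⟩ := hF1
  obtain ⟨G, hGc, hGeq⟩ := hF2
  set S := closure X1 ∩ closure X2 with hSdef
  have hSclosed : IsClosed S := isClosed_closure.inter isClosed_closure
  by_cases hS : S.Nonempty
  · exfalso
    haveI : CompleteSpace S := hSclosed.completeSpace_coe
    haveI : Nonempty S := hS.to_subtype
    set f : ℕ ⊕ ℕ → Set S := Sum.elim (fun k => Subtype.val ⁻¹' F k)
      (fun k => Subtype.val ⁻¹' G k) with hf
    have hfc : ∀ i, IsClosed (f i) := by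
      rintro (k | k)
      · exact (hFc k).preimage continuous_subtype_val
      · exact (hGc k).preimage continuous_subtype_val
    have hfu : ⋃ i, f i = Set.univ := by
      ext ⟨z, hz⟩
      simp only [Set.mem_univ, iff_true, Set.mem_iUnion]
      have : z ∈ X1 ∪ X2 := hunion ▸ Set.mem_univ z
      rcases this with h | h
      · rw [hFeq] at h
        obtain ⟨k, hk⟩ := Set.mem_iUnion.mp h
        exact ⟨Sum.inl k, hk⟩
      · rw [hGeq] at h
        obtain ⟨k, hk⟩ := Set.mem_iUnion.mp h
        exact ⟨Sum.inr k, hk⟩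
    obtain ⟨i, hi⟩ := nonempty_interior_of_iUnion_of_closed hfc hfu
    obtain ⟨x, hxint⟩ := hi
    -- extract an ambient ball
    have hnb : f i ∈ nhds x := mem_interior_iff_mem_nhds.mp hxint
    rw [nhds_induced, Filter.mem_comap] at hnb
    obtain ⟨t, ht, htsub⟩ := hnb
    obtain ⟨ε, hε, hballt⟩ := Metric.mem_nhds_iff.mp ht
    have hFsub : ∀ k, F k ⊆ X1 := by
      intro k; rw [hFeq]; exact Set.subset_iUnion F k
    have hGsub : ∀ k, G k ⊆ X2 := by
      intro k; rw [hGeq]; exact Set.subset_iUnion G k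
    rcases i with k | k
    · have hsub1 : Metric.ball (x : EuclideanSpace ℝ (Fin n)) ε ∩ S ⊆ X1 := by
        intro z hz
        have hz' : (⟨z, hz.2⟩ : S) ∈ f (Sum.inl k) := htsub (hballt hz.1)
        exact hFsub k hz'
      exact key_lemma X1 X2 hdisj hunion hW2 x ε hε x.2 hsub1
    · have hsub2 : Metric.ball (x : EuclideanSpace ℝ (Fin n)) ε ∩
          (closure X2 ∩ closure X1) ⊆ X2 := by
        intro z hz
        have hz' : (⟨z, hz.2.2, hz.2.1⟩ : S) ∈ f (Sum.inr k) := htsub (hballt hz.1)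
        exact hGsub k hz'
      exact key_lemma X2 X1 hdisj.symm (by rw [Set.union_comm]; exact hunion) hW1 x ε hε
        ⟨x.2.2, x.2.1⟩ hsub2
  · -- S empty: X1 and X2 are clopen
    rw [Set.not_nonempty_iff_eq_empty] at hS
    have hX1c : IsClosed X1 := by
      rw [← closure_subset_iff_isClosed]
      intro z hz
      have : z ∈ X1 ∪ X2 := hunion ▸ Set.mem_univ z
      rcases this with h | h
      · exact h
      · exact absurd (Set.mem_inter hz (subset_closure h))
          (by rw [← hSdef, hS]; exact Set.notMem_empty z)
    have hX2c : IsClosed X2 := by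
      rw [← closure_subset_iff_isClosed]
      intro z hz
      have : z ∈ X1 ∪ X2 := hunion ▸ Set.mem_univ z
      rcases this with h | h
      · exact absurd (Set.mem_inter (subset_closure h) hz)
          (by rw [← hSdef, hS]; exact Set.notMem_empty z)
      · exact h
    have hcompl : X2 = X1ᶜ := by
      ext z
      constructor
      · exact fun h hz => hdisj.ne_of_mem hz h rfl
      · exact fun h => (hunion ▸ Set.mem_univ z : z ∈ X1 ∪ X2).resolve_left h
    have hX1open : IsOpen X1 := by
      rw [← isClosed_compl_iff, ← hcompl]; exact hX2c
    have hclopen : IsClopen X1 := ⟨hX1c, hX1open⟩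
    haveI : PreconnectedSpace (EuclideanSpace ℝ (Fin n)) :=
      ⟨(convex_univ : Convex ℝ (Set.univ : Set (EuclideanSpace ℝ (Fin n)))).isPreconnected⟩
    rcases isClopen_iff.mp hclopen with h | h
    · right
      rw [h, Set.empty_union] at hunion
      exact hunion
    · exact Or.inl h
end

section
/- Let X be a topological space, Y a T₁-space, and f : X → Y a function such that for every connected set C ⊆ X whose interior is connected and dense in C, the image f(C) is connected. Then f is weakly Gibson, i.e., for every open connected set U ⊆ X, f(closure(U)) ⊆ closure(f(U)). -/
theorem stmt4 {X Y : Type*} [TopologicalSpace X] [TopologicalSpace Y] [T1Space Y] (f : X → Y)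
    (h : ∀ C : Set X, IsConnected C → IsConnected (interior C) →
      C ⊆ closure (interior C) → IsConnected (f '' C)) :
    ∀ U : Set X, IsOpen U → IsConnected U → f '' closure U ⊆ closure (f '' U) := by
  intro U hU hUc
  rintro y ⟨x, hx, rfl⟩
  by_contra hfx
  set C : Set X := insert x U with hC
  have hUC : U ⊆ C := Set.subset_insert x U
  have hCcl : C ⊆ closure U := Set.insert_subset hx subset_closure
  have hUint : U ⊆ interior C := interior_maximal hUC hU
  have hintcl : interior C ⊆ closure U := interior_subset.trans hCcl
  have hCconn : IsConnected C :=
    ⟨⟨x, Set.mem_insert x U⟩, hUc.isPreconnected.subset_closure hUC hCcl⟩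
  have hintconn : IsConnected (interior C) :=
    ⟨hUc.nonempty.mono hUint, hUc.isPreconnected.subset_closure hUint hintcl⟩
  have hsub : C ⊆ closure (interior C) := hCcl.trans (closure_mono hUint)
  have himg : IsConnected (f '' C) := h C hCconn hintconn hsub
  -- f '' C = insert (f x) (f '' U)
  have himgeq : f '' C = insert (f x) (f '' U) := Set.image_insert_eq
  -- {f x} is clopen in f '' C
  have hopen : IsOpen ((closure (f '' U))ᶜ) := isClosed_closure.isOpen_compl
  have hinter : f '' C ∩ (closure (f '' U))ᶜ = {f x} := by
    rw [himgeq]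
    ext z
    simp only [Set.mem_inter_iff, Set.mem_insert_iff, Set.mem_compl_iff, Set.mem_singleton_iff]
    constructor
    · rintro ⟨hz1 | hz2, hz3⟩
      · exact hz1
      · exact absurd (subset_closure hz2) hz3
    · rintro rfl; exact ⟨Or.inl rfl, hfx⟩
  have hfxC : f x ∈ f '' C := ⟨x, Set.mem_insert x U, rfl⟩
  obtain ⟨u, hu⟩ := hUc.nonempty
  have := (isPreconnected_closed_iff.mp himg.isPreconnected) {f x} (closure (f '' U))
    isClosed_singleton isClosed_closure
    (by rw [himgeq]; rintro z (rfl | hz)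
        · exact Or.inl rfl
        · exact Or.inr (subset_closure hz))
    ⟨f x, hfxC, rfl⟩
    ⟨f u, ⟨u, hUC hu, rfl⟩, subset_closure ⟨u, hu, rfl⟩⟩
  obtain ⟨z, _, rfl, hz2⟩ := this
  exact hfx hz2
end

section
/- Let X be a locally convex topological vector space over ℝ, Y a T₁-space, and f : X → Y a function such that for every connected set C ⊆ X whose interior is connected and dense in C, the image f(C) is connected. Then f is strongly W-Gibson: for every open convex set G ⊆ X, every x in the closure of G, and every neighborhood U of x, f(x) lies in the closure of f(G ∩ U). -/
/-!
Shrink `U` to an open convex neighbourhood `W` of `x`; then `s = G ∩ W` is open and connected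
with `x ∈ closure s`. The set `C = insert x s` satisfies `s ⊆ interior C ⊆ C ⊆ closure s`, so it
meets the hypothesis and `f '' C = insert (f x) (f '' s)` is connected. If `f x` were outside
`closure (f '' s)`, the closed sets `{f x}` (here T₁ is used) and `closure (f '' s)` would split it.
-/

open Set

theorem IsPreconnected.mem_closure_of_insert {Y : Type*} [TopologicalSpace Y] [T1Space Y]
    {y : Y} {s : Set Y} (hs : s.Nonempty) (h : IsPreconnected (insert y s)) :
    y ∈ closure s := by
  obtain ⟨z, -, hzs, rfl⟩ :=
    isPreconnected_closed_iff.mp h (closure s) {y} isClosed_closure isClosed_singleton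
      (insert_subset (Or.inr rfl) (subset_closure.trans subset_union_left))
      (hs.mono fun z hz => ⟨mem_insert_of_mem y hz, subset_closure hz⟩)
      ⟨y, mem_insert y s, rfl⟩
  exact hzs

section InsertClosurePoint

variable {X : Type*} [TopologicalSpace X] {x : X} {s : Set X}

theorem IsPreconnected.isConnected_insert_of_mem_closure (hs : IsPreconnected s)
    (hx : x ∈ closure s) : IsConnected (insert x s) :=
  ⟨insert_nonempty x s, hs.subset_closure (subset_insert x s) (insert_subset hx subset_closure)⟩

theorem IsPreconnected.isConnected_interior_insert_of_mem_closure (hso : IsOpen s)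
    (hs : IsPreconnected s) (hx : x ∈ closure s) : IsConnected (interior (insert x s)) := by
  have hs_int : s ⊆ interior (insert x s) := hso.subset_interior_iff.mpr (subset_insert x s)
  exact ⟨(closure_nonempty_iff.mp ⟨x, hx⟩).mono hs_int,
    hs.subset_closure hs_int (interior_subset.trans (insert_subset hx subset_closure))⟩

theorem IsOpen.insert_subset_closure_interior_insert (hso : IsOpen s) (hx : x ∈ closure s) :
    insert x s ⊆ closure (interior (insert x s)) :=
  (insert_subset hx subset_closure).trans
    (closure_mono (hso.subset_interior_iff.mpr (subset_insert x s)))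

theorem mem_closure_image_of_isOpen_of_isPreconnected {Y : Type*} [TopologicalSpace Y]
    [T1Space Y] {f : X → Y}
    (h : ∀ C : Set X, IsConnected C → IsConnected (interior C) →
      C ⊆ closure (interior C) → IsConnected (f '' C))
    (hso : IsOpen s) (hs : IsPreconnected s) (hx : x ∈ closure s) :
    f x ∈ closure (f '' s) := by
  have h_img := h _ (hs.isConnected_insert_of_mem_closure hx)
    (hs.isConnected_interior_insert_of_mem_closure hso hx)
    (hso.insert_subset_closure_interior_insert hx)
  rw [image_insert_eq] at h_img
  exact IsPreconnected.mem_closure_of_insert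
    ((closure_nonempty_iff.mp ⟨x, hx⟩).image f) h_img.isPreconnected

end InsertClosurePoint

theorem stmt5 {X Y : Type*} [AddCommGroup X] [Module ℝ X] [TopologicalSpace X]
    [IsTopologicalAddGroup X] [ContinuousSMul ℝ X] [LocallyConvexSpace ℝ X]
    [TopologicalSpace Y] [T1Space Y] (f : X → Y)
    (h : ∀ C : Set X, IsConnected C → IsConnected (interior C) →
      C ⊆ closure (interior C) → IsConnected (f '' C)) :
    ∀ G : Set X, IsOpen G → Convex ℝ G → ∀ x ∈ closure G, ∀ U ∈ nhds x,
      f x ∈ closure (f '' (G ∩ U)) := by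
  intro G hGo hGc x hx U hU
  obtain ⟨S, ⟨hS, hSc⟩, hSU⟩ := (LocallyConvexSpace.convex_basis (𝕜 := ℝ) x).mem_iff.mp hU
  have hx_cl : x ∈ closure (G ∩ interior S) := by
    simpa only [inter_comm] using
      isOpen_interior.inter_closure ⟨mem_interior_iff_mem_nhds.mpr hS, hx⟩
  have hfx_cl := mem_closure_image_of_isOpen_of_isPreconnected h (hGo.inter isOpen_interior)
    (hGc.inter hSc.interior).isPreconnected hx_cl
  exact closure_mono (image_mono (inter_subset_inter_right G (interior_subset.trans hSU))) hfx_cl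
end

section
/- Let X be a locally connected hereditarily Baire space, Y a topological space, and f : X → Y an Fσ-measurable weakly Gibson mapping. Then for every connected set C ⊆ X whose interior U is connected and satisfies C ⊆ closure(U), the image f(C) is connected. -/
/-!
Let `U = interior C`. Weak Gibson gives `f '' U ⊆ f '' C ⊆ closure (f '' U)`, so it suffices that
`f '' U` is preconnected. Suppose open `V`, `W` split it, and let `K` be the set of points adherent
to both `U ∩ f ⁻¹' V` and `U ∩ f ⁻¹' W`; `K ∩ U` is nonempty because `U` is connected. As `K` is a
Baire space and `f ⁻¹' V`, `f ⁻¹' W` are Fσ, some open `O` meeting `K ∩ U` has `f` mapping `O ∩ K`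
into one of them, say `V`. In the component `G` of `O ∩ U` through such a point, a component `O'`
of `G \ closure (U ∩ f ⁻¹' V)` is mapped into `W`, and a point `z ∈ G` on its frontier lies in `K`,
so `f z ∈ V`. But weak Gibson puts `f z` in `closure (f '' O')`, which misses the open set `V`.
-/

open Set Topology

section

variable {X Y : Type*} [TopologicalSpace X] [TopologicalSpace Y]

variable (X) in
def HereditarilyBaire : Prop :=
  ∀ F : Set X, IsClosed F → BaireSpace F

def FsigmaMeasurable (f : X → Y) : Prop :=
  ∀ V : Set Y, IsOpen V → IsFsigma (f ⁻¹' V)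

def WeaklyGibson (f : X → Y) : Prop :=
  ∀ U : Set X, IsOpen U → IsConnected U → f '' closure U ⊆ closure (f '' U)

theorem IsPreconnected.inter_frontier_nonempty_of_isOpen {s t : Set X} (hs : IsPreconnected s)
    (ht : IsOpen t) (hst : (s ∩ t).Nonempty) (hst' : (s \ t).Nonempty) :
    (s ∩ frontier t).Nonempty := by
  by_contra h
  have hsplit : s ⊆ t ∪ (closure t)ᶜ := fun p hp =>
    or_iff_not_imp_left.2 fun hpt hpc => h ⟨p, hp, hpc, by rwa [ht.interior_eq]⟩
  obtain ⟨p, -, hpt, hpc⟩ := hs t _ ht isClosed_closure.isOpen_compl hsplit hst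
    (hst'.imp fun p ⟨hp, hpt⟩ => ⟨hp, (hsplit hp).resolve_left hpt⟩)
  exact hpc (subset_closure hpt)

theorem mem_connectedComponentIn_of_mem_closure {F : Set X} {x z : X}
    (hz : z ∈ closure (connectedComponentIn F x)) (hzF : z ∈ F) :
    z ∈ connectedComponentIn F x := by
  have hx : x ∈ F := by
    by_contra hx
    rw [connectedComponentIn_eq_empty hx, closure_empty] at hz
    exact hz
  exact (isPreconnected_connectedComponentIn.subset_closure (subset_insert z _)
    (insert_subset hz subset_closure)).subset_connectedComponentIn
    (mem_insert_of_mem _ (mem_connectedComponentIn hx))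
    (insert_subset hzF (connectedComponentIn_subset F x)) (mem_insert z _)

theorem IsOpen.exists_interior_inter_nonempty_of_subset_iUnion [BaireSpace X] {ι : Type*}
    [Countable ι] {D : Set X} {F : ι → Set X} (hD : IsOpen D) (hne : D.Nonempty)
    (hF : ∀ i, IsClosed (F i)) (hcov : D ⊆ ⋃ i, F i) :
    ∃ i, (interior (F i) ∩ D).Nonempty := by
  have hdense : Dense (⋃ o : Option ι, interior (o.elim Dᶜ F)) := by
    refine dense_iUnion_interior_of_closed (by rintro (_ | i); exacts [hD.isClosed_compl, hF i]) ?_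
    refine eq_univ_of_forall fun p => ?_
    by_cases hp : p ∈ D
    · obtain ⟨i, hi⟩ := mem_iUnion.1 (hcov hp)
      exact mem_iUnion.2 ⟨some i, hi⟩
    · exact mem_iUnion.2 ⟨none, hp⟩
  obtain ⟨z, hzD, hz⟩ := hdense.inter_open_nonempty D hD hne
  obtain ⟨_ | i, hi⟩ := mem_iUnion.1 hz
  · exact absurd hzD (interior_subset hi)
  · exact ⟨i, z, hi, hzD⟩

theorem exists_isOpen_inter_subset_of_subset_iUnion {K U : Set X} [BaireSpace K] {ι : Type*}
    [Countable ι] {F : ι → Set X} (hF : ∀ i, IsClosed (F i)) (hU : IsOpen U)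
    (hne : (K ∩ U).Nonempty) (hcov : K ∩ U ⊆ ⋃ i, F i) :
    ∃ i, ∃ O : Set X, IsOpen O ∧ (O ∩ K ∩ U).Nonempty ∧ O ∩ K ⊆ F i := by
  obtain ⟨p, hpK, hpU⟩ := hne
  obtain ⟨i, d, hdF, hdU⟩ :=
    (hU.preimage continuous_subtype_val).exists_interior_inter_nonempty_of_subset_iUnion
      (F := fun i => ((↑) : K → X) ⁻¹' F i) ⟨⟨p, hpK⟩, hpU⟩
      (fun i => (hF i).preimage continuous_subtype_val)
      fun q hq => by simpa using hcov ⟨q.2, hq⟩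
  obtain ⟨O, hO, hOeq⟩ := isOpen_induced_iff.1 (isOpen_interior (s := ((↑) : K → X) ⁻¹' F i))
  refine ⟨i, O, hO, ⟨d, ⟨?_, d.2⟩, hdU⟩, fun q hq => ?_⟩
  · exact (hOeq ▸ hdF : d ∈ (↑) ⁻¹' O)
  · have hqO : (⟨q, hq.2⟩ : K) ∈ (↑) ⁻¹' O := hq.1
    rw [hOeq] at hqO
    exact (interior_subset hqO : (⟨q, hq.2⟩ : K) ∈ (↑) ⁻¹' F i)

namespace WeaklyGibson

variable [LocallyConnectedSpace X] {f : X → Y}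

theorem exists_mem_closure_inter_closure (hf : WeaklyGibson f) {G : Set X} (hGo : IsOpen G)
    (hGc : IsPreconnected G) {V W : Set Y} (hV : IsOpen V) (hcov : G ⊆ f ⁻¹' V ∪ f ⁻¹' W)
    (hdisj : ∀ p ∈ G, f p ∈ V → f p ∉ W) (hGV : (G ∩ f ⁻¹' V).Nonempty)
    (hGW : (G ∩ f ⁻¹' W).Nonempty) :
    ∃ z ∈ G, z ∈ closure (G ∩ f ⁻¹' V) ∧ z ∈ closure (G ∩ f ⁻¹' W) ∧ f z ∈ W := by
  set A := G ∩ f ⁻¹' V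
  obtain ⟨b, hbG, hbW⟩ := hGW
  by_cases hbA : b ∈ closure A
  · exact ⟨b, hbG, hbA, subset_closure ⟨hbG, hbW⟩, hbW⟩
  set O := connectedComponentIn (G \ closure A) b
  have hOo : IsOpen O := (hGo.sdiff isClosed_closure).connectedComponentIn
  have hOc : IsConnected O := isConnected_connectedComponentIn_iff.2 ⟨hbG, hbA⟩
  have hOsub : O ⊆ G \ closure A := connectedComponentIn_subset _ _
  have hOW : O ⊆ G ∩ f ⁻¹' W := fun p hp =>
    ⟨(hOsub hp).1, (hcov (hOsub hp).1).resolve_left fun hpV =>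
      (hOsub hp).2 (subset_closure ⟨(hOsub hp).1, hpV⟩)⟩
  obtain ⟨a, haA⟩ := hGV
  obtain ⟨z, hzG, hzO⟩ := hGc.inter_frontier_nonempty_of_isOpen hOo
    ⟨b, hbG, mem_connectedComponentIn ⟨hbG, hbA⟩⟩
    ⟨a, haA.1, fun haO => (hOsub haO).2 (subset_closure haA)⟩
  rw [hOo.frontier_eq] at hzO
  have hzA : z ∈ closure A := by
    by_contra hzA
    exact hzO.2 (mem_connectedComponentIn_of_mem_closure hzO.1 ⟨hzG, hzA⟩)
  refine ⟨z, hzG, hzA, closure_mono hOW hzO.1, (hcov hzG).resolve_left fun hfzV => ?_⟩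
  obtain ⟨_, hyV, p, hpO, rfl⟩ :=
    mem_closure_iff.1 (hf O hOo hOc ⟨z, hzO.1, rfl⟩) V hV hfzV
  exact hdisj p (hOW hpO).1 hyV (hOW hpO).2

theorem not_subset_preimage_of_isOpen (hf : WeaklyGibson f) {U O : Set X} (hU : IsOpen U)
    (hO : IsOpen O) {V W : Set Y} (hV : IsOpen V) (hcov : U ⊆ f ⁻¹' V ∪ f ⁻¹' W)
    (hdisj : ∀ p ∈ U, f p ∈ V → f p ∉ W) {x : X} (hxO : x ∈ O) (hxU : x ∈ U)
    (hxV : x ∈ closure (U ∩ f ⁻¹' V)) (hxW : x ∈ closure (U ∩ f ⁻¹' W)) :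
    ¬O ∩ (closure (U ∩ f ⁻¹' V) ∩ closure (U ∩ f ⁻¹' W)) ⊆ f ⁻¹' V := by
  intro hOV
  set G := connectedComponentIn (O ∩ U) x
  have hxG : x ∈ G := mem_connectedComponentIn ⟨hxO, hxU⟩
  have hGo : IsOpen G := (hO.inter hU).connectedComponentIn
  have hGsub : G ⊆ O ∩ U := connectedComponentIn_subset _ _
  have hGU : G ⊆ U := hGsub.trans inter_subset_right
  have hGV : (G ∩ f ⁻¹' V).Nonempty :=
    (mem_closure_iff.1 hxV G hGo hxG).imp fun _ hp => ⟨hp.1, hp.2.2⟩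
  have hGW : (G ∩ f ⁻¹' W).Nonempty :=
    (mem_closure_iff.1 hxW G hGo hxG).imp fun _ hp => ⟨hp.1, hp.2.2⟩
  obtain ⟨z, hzG, hzV, hzW, hfz⟩ := hf.exists_mem_closure_inter_closure hGo
    isPreconnected_connectedComponentIn hV (hGU.trans hcov) (fun p hp => hdisj p (hGU hp))
    hGV hGW
  exact hdisj z (hGU hzG) (hOV ⟨(hGsub hzG).1, closure_mono (inter_subset_inter_left _ hGU) hzV,
    closure_mono (inter_subset_inter_left _ hGU) hzW⟩) hfz

theorem isPreconnected_image (hf : WeaklyGibson f) (hX : HereditarilyBaire X)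
    (hmeas : FsigmaMeasurable f) {U : Set X} (hUo : IsOpen U) (hUc : IsPreconnected U) :
    IsPreconnected (f '' U) := by
  rintro V W hV hW hcovY ⟨_, ⟨a, haU, rfl⟩, haV⟩ ⟨_, ⟨b, hbU, rfl⟩, hbW⟩
  by_contra hVW
  have hdisj : ∀ p ∈ U, f p ∈ V → f p ∉ W := fun p hp hpV hpW =>
    hVW ⟨f p, mem_image_of_mem f hp, hpV, hpW⟩
  have hcov : U ⊆ f ⁻¹' V ∪ f ⁻¹' W := by rw [← preimage_union]; exact image_subset_iff.1 hcovY
  set K := closure (U ∩ f ⁻¹' V) ∩ closure (U ∩ f ⁻¹' W)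
  have hKU : (K ∩ U).Nonempty := by
    obtain ⟨z, hzU, hzV, hzW, -⟩ := hf.exists_mem_closure_inter_closure hUo hUc hV hcov hdisj
      ⟨a, haU, haV⟩ ⟨b, hbU, hbW⟩
    exact ⟨z, ⟨hzV, hzW⟩, hzU⟩
  have := hX K (isClosed_closure.inter isClosed_closure)
  obtain ⟨FV, hFVc, hFV⟩ := hmeas V hV
  obtain ⟨FW, hFWc, hFW⟩ := hmeas W hW
  obtain ⟨i, O, hO, ⟨x, ⟨hxO, hxV, hxW⟩, hxU⟩, hOK⟩ :=
    exists_isOpen_inter_subset_of_subset_iUnion (F := Sum.elim FV FW)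
      (by rintro (n | n); exacts [hFVc n, hFWc n]) hUo hKU
      fun p hp => by
        simp only [iUnion_sum, Sum.elim_inl, Sum.elim_inr, ← hFV, ← hFW]
        exact hcov hp.2
  rcases i with n | n
  · exact hf.not_subset_preimage_of_isOpen hUo hO hV hcov hdisj hxO hxU hxV hxW
      fun p hp => hFV ▸ mem_iUnion_of_mem n (hOK hp)
  · exact hf.not_subset_preimage_of_isOpen hUo hO hW (union_comm _ _ ▸ hcov)
      (fun p hp hpW hpV => hdisj p hp hpV hpW) hxO hxU hxW hxV
      fun p hp => hFW ▸ mem_iUnion_of_mem n (hOK ⟨hp.1, hp.2.2, hp.2.1⟩)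

end WeaklyGibson

end

theorem stmt6_general {X Y : Type*} [TopologicalSpace X] [LocallyConnectedSpace X] [TopologicalSpace Y]
    (hBaire : ∀ F : Set X, IsClosed F → BaireSpace F)
    (f : X → Y)
    (hmeas : ∀ V : Set Y, IsOpen V → IsFsigma (f ⁻¹' V))
    (hwG : ∀ U : Set X, IsOpen U → IsConnected U → f '' closure U ⊆ closure (f '' U))
    (C : Set X) (hint : IsConnected (interior C))
    (hdense : C ⊆ closure (interior C)) :
    IsConnected (f '' C) := by
  have himage : IsPreconnected (f '' interior C) :=
    WeaklyGibson.isPreconnected_image hwG hBaire hmeas isOpen_interior hint.isPreconnected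
  refine ⟨(hint.nonempty.mono interior_subset).image f,
    himage.subset_closure (image_mono interior_subset) ?_⟩
  rintro _ ⟨p, hp, rfl⟩
  exact hwG _ isOpen_interior hint ⟨p, hdense hp, rfl⟩

theorem stmt6 {X Y : Type*} [TopologicalSpace X] [LocallyConnectedSpace X] [TopologicalSpace Y]
    (hBaire : ∀ F : Set X, IsClosed F → BaireSpace F)
    (f : X → Y)
    (hmeas : ∀ V : Set Y, IsOpen V → IsFsigma (f ⁻¹' V))
    (hwG : ∀ U : Set X, IsOpen U → IsConnected U → f '' closure U ⊆ closure (f '' U))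
    (C : Set X) (hC : IsConnected C) (hint : IsConnected (interior C))
    (hdense : C ⊆ closure (interior C)) :
    IsConnected (f '' C) :=
  stmt6_general hBaire f hmeas hwG C hint hdense
end

section
/- Let X be a locally connected hereditarily Baire connected space, Y a topological space, and f : X → Y a weakly Gibson Fσ-measurable mapping. Then f(X) is connected. -/
open Set Topology

/-- Key auxiliary lemma: if `E = f⁻¹ U`, `Eᶜ = f⁻¹ V`, `U`, `V` open with disjoint traces
on the range of `f`, and some connected open `W` meets `frontier E` only inside `E`,
then the weak Gibson property gives a contradiction. -/
lemma aux_stmt7 {X Y : Type*} [TopologicalSpace X] [LocallyConnectedSpace X]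
    [TopologicalSpace Y] (f : X → Y)
    (hwG : ∀ U : Set X, IsOpen U → IsConnected U → f '' closure U ⊆ closure (f '' U))
    (U V : Set Y) (hU : IsOpen U)
    (hdisj : ∀ x : X, ¬(f x ∈ U ∧ f x ∈ V))
    (E : Set X) (hE : E = f ⁻¹' U) (hEc : Eᶜ = f ⁻¹' V)
    (W : Set X) (hWo : IsOpen W) (hWc : IsPreconnected W)
    (x : X) (hxW : x ∈ W) (hxD : x ∈ frontier E)
    (hsub : W ∩ frontier E ⊆ E) : False := by
  have hfrF : frontier Eᶜ = frontier E := frontier_compl E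
  -- x ∈ closure Eᶜ
  have hxclF : x ∈ closure Eᶜ := by
    rw [← hfrF] at hxD
    exact hxD.1
  -- find y ∈ W ∩ F
  obtain ⟨y, hyW, hyF⟩ : ∃ y, y ∈ W ∧ y ∈ Eᶜ := by
    rcases mem_closure_iff.1 hxclF W hWo hxW with ⟨y, hy⟩
    exact ⟨y, hy.1, hy.2⟩
  -- y ∈ interior Eᶜ
  have hyint : y ∈ interior Eᶜ := by
    by_contra hni
    have hyfr : y ∈ frontier Eᶜ := ⟨subset_closure hyF, hni⟩
    rw [hfrF] at hyfr
    exact hyF (hsub ⟨hyW, hyfr⟩)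
  -- Ω and the component C of y
  set Ω : Set X := W ∩ interior Eᶜ with hΩ
  have hΩo : IsOpen Ω := hWo.inter isOpen_interior
  have hyΩ : y ∈ Ω := ⟨hyW, hyint⟩
  set C : Set X := connectedComponentIn Ω y with hC
  have hCo : IsOpen C := hΩo.connectedComponentIn
  have hyC : y ∈ C := mem_connectedComponentIn hyΩ
  have hCΩ : C ⊆ Ω := connectedComponentIn_subset Ω y
  have hCpc : IsPreconnected C := isPreconnected_connectedComponentIn
  -- x ∉ C (x ∈ frontier Eᶜ hence not in interior Eᶜ)
  have hxD' : x ∈ frontier Eᶜ := by rw [hfrF]; exact hxD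
  have hxnC : x ∉ C := fun h => hxD'.2 (hCΩ h).2
  -- find z ∈ W ∩ closure C with z ∉ C
  obtain ⟨z, hzW, hzcl, hznC⟩ : ∃ z, z ∈ W ∧ z ∈ closure C ∧ z ∉ C := by
    by_contra h
    push_neg at h
    have hsub' : W ⊆ C ∪ (closure C)ᶜ := by
      intro w hw
      by_cases hwc : w ∈ closure C
      · exact Or.inl (h w hw hwc)
      · exact Or.inr hwc
    rcases hWc C (closure C)ᶜ hCo isClosed_closure.isOpen_compl hsub'
        ⟨y, hyW, hyC⟩ ⟨x, hxW, fun hxc => hxnC (h x hxW hxc)⟩ with ⟨w, _, hw1, hw2⟩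
    exact hw2 (subset_closure hw1)
  -- z ∉ Ω (else it would be in C by maximality)
  have hznΩ : z ∉ Ω := by
    intro hzΩ
    have hpc : IsPreconnected (insert z C) :=
      hCpc.subset_closure (subset_insert z C)
        (insert_subset hzcl subset_closure)
    have : insert z C ⊆ C :=
      hpc.subset_connectedComponentIn (mem_insert_iff.2 (Or.inr hyC))
        (insert_subset hzΩ hCΩ)
    exact hznC (this (mem_insert z C))
  -- z ∈ frontier Eᶜ, hence z ∈ E, hence f z ∈ U
  have hzclF : z ∈ closure Eᶜ :=
    (closure_mono (hCΩ.trans (inter_subset_right.trans interior_subset))) hzcl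
  have hznint : z ∉ interior Eᶜ := fun h => hznΩ ⟨hzW, h⟩
  have hzE : z ∈ E := hsub ⟨hzW, by rw [← hfrF]; exact ⟨hzclF, hznint⟩⟩
  have hfzU : f z ∈ U := by rw [hE] at hzE; exact hzE
  -- weak Gibson on C
  have hCconn : IsConnected C := ⟨⟨y, hyC⟩, hCpc⟩
  have hfz : f z ∈ closure (f '' C) := hwG C hCo hCconn ⟨z, hzcl, rfl⟩
  rcases mem_closure_iff.1 hfz U hU hfzU with ⟨v, hvU, w, hwC, hvw⟩
  have hwF : w ∈ Eᶜ := interior_subset (hCΩ hwC).2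
  have hfwV : f w ∈ V := by rw [hEc] at hwF; exact hwF
  exact hdisj w ⟨hvw ▸ hvU, hfwV⟩

theorem stmt7 {X Y : Type*} [TopologicalSpace X] [LocallyConnectedSpace X] [ConnectedSpace X]
    [TopologicalSpace Y]
    (hBaire : ∀ F : Set X, IsClosed F → BaireSpace F)
    (f : X → Y)
    (hmeas : ∀ V : Set Y, IsOpen V → IsFsigma (f ⁻¹' V))
    (hwG : ∀ U : Set X, IsOpen U → IsConnected U → f '' closure U ⊆ closure (f '' U)) :
    IsConnected (Set.range f) := by
  refine ⟨Set.range_nonempty f, ?_⟩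
  intro U V hU hV hcov ⟨a, haR, haU⟩ ⟨b, hbR, hbV⟩
  by_contra hcon
  have hdisj : ∀ x : X, ¬(f x ∈ U ∧ f x ∈ V) := by
    intro x ⟨h1, h2⟩
    exact hcon ⟨f x, mem_range_self x, h1, h2⟩
  set E : Set X := f ⁻¹' U with hEdef
  have hEc : Eᶜ = f ⁻¹' V := by
    ext x
    simp only [mem_compl_iff, mem_preimage, hEdef]
    constructor
    · intro h
      rcases hcov (mem_range_self x) with h1 | h1
      · exact absurd h1 h
      · exact h1
    · intro h h2
      exact hdisj x ⟨h2, h⟩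
  -- E and Eᶜ are nonempty
  obtain ⟨xa, hxa⟩ := haR
  obtain ⟨xb, hxb⟩ := hbR
  have hEne : E.Nonempty := ⟨xa, by rw [hEdef, mem_preimage, hxa]; exact haU⟩
  have hEcne : Eᶜ.Nonempty := ⟨xb, by rw [hEc, mem_preimage, hxb]; exact hbV⟩
  -- frontier of E
  set D : Set X := frontier E with hDdef
  have hDne : D.Nonempty := by
    rcases eq_empty_or_nonempty D with h | h
    · rcases frontier_eq_empty_iff.1 h with h1 | h1
      · exact (hEne.ne_empty h1).elim
      · exact (hEcne.ne_empty (by rw [h1, compl_univ])).elim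
    · exact h
  have hDclosed : IsClosed D := isClosed_frontier
  haveI : BaireSpace D := hBaire D hDclosed
  haveI : Nonempty D := hDne.to_subtype
  -- Fσ decompositions
  obtain ⟨En, hEn, hEeq⟩ := hmeas U hU
  obtain ⟨Fn, hFn, hFeq⟩ := hmeas V hV
  -- family of closed sets covering D
  set G : ℕ ⊕ ℕ → Set X := Sum.elim En Fn with hGdef
  have hGclosed : ∀ i, IsClosed (G i) := by rintro (n | n) <;> [exact hEn n; exact hFn n]
  have hGcover : (⋃ i, (Subtype.val ⁻¹' G i : Set D)) = univ := by
    ext ⟨x, hxD⟩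
    simp only [mem_iUnion, mem_preimage, mem_univ, iff_true]
    rcases hcov (mem_range_self x) with h | h
    · have : x ∈ ⋃ n, En n := by rw [← hEeq]; exact h
      rcases mem_iUnion.1 this with ⟨n, hn⟩
      exact ⟨Sum.inl n, hn⟩
    · have : x ∈ ⋃ n, Fn n := by rw [← hFeq]; exact h
      rcases mem_iUnion.1 this with ⟨n, hn⟩
      exact ⟨Sum.inr n, hn⟩
  obtain ⟨i, hi⟩ := nonempty_interior_of_iUnion_of_closed
    (f := fun i => (Subtype.val ⁻¹' G i : Set D))
    (fun i => (hGclosed i).preimage continuous_subtype_val) hGcover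
  -- get an open W₀ in X with W₀ ∩ D nonempty and ⊆ G i
  obtain ⟨p, hp⟩ := hi
  have hio : IsOpen (interior (Subtype.val ⁻¹' G i : Set D)) := isOpen_interior
  rw [isOpen_induced_iff] at hio
  obtain ⟨W₀, hW₀o, hW₀eq⟩ := hio
  have hpW₀ : (p : X) ∈ W₀ := by
    have : p ∈ Subtype.val ⁻¹' W₀ := by rw [hW₀eq]; exact hp
    exact this
  have hW₀sub : W₀ ∩ D ⊆ G i := by
    intro w ⟨hw1, hw2⟩
    have : (⟨w, hw2⟩ : D) ∈ Subtype.val ⁻¹' W₀ := hw1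
    rw [hW₀eq] at this
    have h2 := interior_subset (s := (Subtype.val ⁻¹' G i : Set D)) this
    exact h2
  -- shrink W₀ to a connected open W containing p
  obtain ⟨W, hWsub, hWo, hpW, hWconn⟩ :=
    locallyConnectedSpace_iff_subsets_isOpen_isConnected.1 ‹LocallyConnectedSpace X›
      (p : X) W₀ (hW₀o.mem_nhds hpW₀)
  have hpD : (p : X) ∈ D := p.2
  have hWD : W ∩ D ⊆ G i := fun w ⟨h1, h2⟩ => hW₀sub ⟨hWsub h1, h2⟩
  -- two symmetric cases
  rcases i with n | n
  · -- W ∩ frontier E ⊆ En n ⊆ E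
    have hsubE : W ∩ frontier E ⊆ E := by
      intro w hw
      have : w ∈ En n := hWD hw
      rw [hEdef, hEeq]
      exact mem_iUnion.2 ⟨n, this⟩
    exact aux_stmt7 f hwG U V hU hdisj E hEdef hEc W hWo hWconn.isPreconnected
      (p : X) hpW hpD hsubE
  · -- symmetric: E' = f⁻¹ V
    have hdisj' : ∀ x : X, ¬(f x ∈ V ∧ f x ∈ U) := fun x ⟨h1, h2⟩ => hdisj x ⟨h2, h1⟩
    have hE'c : (f ⁻¹' V)ᶜ = f ⁻¹' U := by rw [← hEc, compl_compl, hEdef]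
    have hfr' : frontier (f ⁻¹' V) = D := by
      rw [← hEc, frontier_compl, hDdef]
    have hsubE' : W ∩ frontier (f ⁻¹' V) ⊆ f ⁻¹' V := by
      intro w hw
      rw [hfr'] at hw
      have : w ∈ Fn n := hWD hw
      rw [hFeq]
      exact mem_iUnion.2 ⟨n, this⟩
    exact aux_stmt7 f hwG V U hV hdisj' (f ⁻¹' V) rfl hE'c W hWo hWconn.isPreconnected
      (p : X) hpW (by rw [hfr']; exact hpD) hsubE'
end

section
/- Let Y be a T₁-space and f : ℝⁿ → Y a weakly Gibson Fσ-measurable mapping. Then the graph of f, i.e., the set {(x, f(x)) : x ∈ ℝⁿ} ⊆ ℝⁿ × Y, is connected. -/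
open Set Metric

lemma isFsigma_empty {X : Type*} [TopologicalSpace X] : IsFsigma (∅ : Set X) :=
  ⟨fun _ => ∅, fun _ => isClosed_empty, by simp⟩

lemma IsFsigma.inter {X : Type*} [TopologicalSpace X] {s t : Set X}
    (hs : IsFsigma s) (ht : IsFsigma t) : IsFsigma (s ∩ t) := by
  obtain ⟨F, hF, rfl⟩ := hs
  obtain ⟨G, hG, rfl⟩ := ht
  refine ⟨fun k => F (Nat.unpair k).1 ∩ G (Nat.unpair k).2,
    fun k => (hF _).inter (hG _), ?_⟩
  ext x
  simp only [mem_inter_iff, mem_iUnion]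
  constructor
  · rintro ⟨⟨n, hn⟩, ⟨m, hm⟩⟩
    exact ⟨Nat.pair n m, by simpa [Nat.unpair_pair] using ⟨hn, hm⟩⟩
  · rintro ⟨k, hk1, hk2⟩
    exact ⟨⟨_, hk1⟩, ⟨_, hk2⟩⟩

lemma isFsigma_iUnion {X : Type*} [TopologicalSpace X] {s : ℕ → Set X}
    (h : ∀ n, IsFsigma (s n)) : IsFsigma (⋃ n, s n) := by
  choose F hF hs using h
  refine ⟨fun k => F (Nat.unpair k).1 (Nat.unpair k).2, fun k => hF _ _, ?_⟩
  ext x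
  simp only [mem_iUnion, hs]
  constructor
  · rintro ⟨n, m, hm⟩
    exact ⟨Nat.pair n m, by simpa [Nat.unpair_pair] using hm⟩
  · rintro ⟨k, hk⟩
    exact ⟨_, _, hk⟩

lemma IsOpen.isFsigma {X : Type*} [PseudoMetricSpace X] {s : Set X}
    (hs : IsOpen s) : IsFsigma s := by
  obtain ⟨T, hTo, hTc, hTeq⟩ := hs.isClosed_compl.isGδ
  rcases T.eq_empty_or_nonempty with rfl | hTne
  · simp only [sInter_empty] at hTeq
    have : s = ∅ := by
      rw [← compl_compl s, hTeq, compl_univ]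
    rw [this]; exact isFsigma_empty
  · obtain ⟨e, he⟩ := hTc.exists_eq_range hTne
    refine ⟨fun k => (e k)ᶜ, fun k => ?_, ?_⟩
    · exact (hTo (e k) (he ▸ mem_range_self k)).isClosed_compl
    · rw [← compl_compl s, hTeq, he, sInter_range, compl_iInter]

lemma fsigma_pre {n : ℕ} {Y : Type*} [TopologicalSpace Y]
    (f : EuclideanSpace ℝ (Fin n) → Y)
    (hmeas : ∀ V : Set Y, IsOpen V → IsFsigma (f ⁻¹' V))
    (w : Set (EuclideanSpace ℝ (Fin n) × Y)) (hw : IsOpen w) :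
    IsFsigma {x | (x, f x) ∈ w} := by
  obtain ⟨bS, hbc, hbne', hb⟩ := TopologicalSpace.exists_countable_basis (EuclideanSpace ℝ (Fin n))
  have hbne : bS.Nonempty := by
    obtain ⟨W, hW, _, _⟩ := hb.exists_subset_of_mem_open (mem_univ (0 : EuclideanSpace ℝ (Fin n)))
      isOpen_univ
    exact ⟨W, hW⟩
  obtain ⟨e, he⟩ := hbc.exists_eq_range hbne
  set V : Set (EuclideanSpace ℝ (Fin n)) → Set Y :=
    fun W => ⋃₀ {Vo | IsOpen Vo ∧ W ×ˢ Vo ⊆ w} with hV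
  have hVopen : ∀ W, IsOpen (V W) := fun W => isOpen_sUnion (fun t ht => ht.1)
  have hEq : {x | (x, f x) ∈ w} = ⋃ k, (e k ∩ f ⁻¹' (V (e k))) := by
    ext x
    simp only [mem_iUnion, mem_inter_iff, mem_setOf_eq, mem_preimage]
    constructor
    · intro hx
      obtain ⟨W', V', hW', hV', hxW', hfxV', hsub⟩ := isOpen_prod_iff.1 hw x (f x) hx
      obtain ⟨W, hWb, hxW, hWsub⟩ := hb.exists_subset_of_mem_open hxW' hW'
      obtain ⟨k, rfl⟩ : ∃ k, e k = W := by rw [he] at hWb; exact hWb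
      exact ⟨k, hxW, mem_sUnion.2 ⟨V', ⟨hV', (Set.prod_mono hWsub Subset.rfl).trans hsub⟩, hfxV'⟩⟩
    · rintro ⟨k, hxW, hfx⟩
      obtain ⟨Vo, ⟨hVo, hsub⟩, hfxVo⟩ := mem_sUnion.1 hfx
      exact hsub ⟨hxW, hfxVo⟩
  rw [hEq]
  exact isFsigma_iUnion fun k =>
    ((hb.isOpen (he ▸ mem_range_self k)).isFsigma).inter (hmeas _ (hVopen _))

lemma geoLemma {n : ℕ} {A B : Set (EuclideanSpace ℝ (Fin n))}
    (hcover : ∀ x, x ∈ A ∨ x ∈ B)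
    (hdisj : ∀ x, x ∈ A → x ∈ B → False)
    (hP : ∀ x ∈ A, ∃ ε > 0, ∀ O : Set (EuclideanSpace ℝ (Fin n)),
      IsOpen O → IsConnected O → O ⊆ ball x ε → x ∈ closure O → (O ∩ A).Nonempty)
    {D : Set (EuclideanSpace ℝ (Fin n))} (hD : IsOpen D) {p : EuclideanSpace ℝ (Fin n)}
    (hpD : p ∈ D) (hpA : p ∈ closure A) (hpB : p ∈ closure B)
    (hsub : ∀ x, x ∈ closure A → x ∈ closure B → x ∈ D → x ∈ A) : False := by
  obtain ⟨ε₀, hε₀, hballD⟩ := Metric.mem_nhds_iff.1 (hD.mem_nhds hpD)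
  obtain ⟨b, hbB, hbp⟩ := Metric.mem_closure_iff.1 hpB (ε₀/4) (by positivity)
  have hbD : b ∈ D := hballD (by rw [mem_ball, dist_comm]; linarith)
  have hbnA : b ∉ closure A := fun h => hdisj b (hsub b h (subset_closure hbB) hbD) hbB
  have hclAne : (closure A).Nonempty := ⟨p, hpA⟩
  set r := infDist b (closure A) with hr
  have hrpos : 0 < r := (isClosed_closure.notMem_iff_infDist_pos hclAne).1 hbnA
  have hrle : r ≤ dist b p := infDist_le_dist_of_mem hpA
  have hballB : ball b r ⊆ B := by
    intro y hy
    rcases hcover y with h | h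
    · exfalso
      have h1 : r ≤ dist b y := infDist_le_dist_of_mem (subset_closure h)
      rw [mem_ball, dist_comm] at hy
      linarith
    · exact h
  obtain ⟨q, hqA, hqd⟩ := isClosed_closure.exists_infDist_eq_dist hclAne b
  have hdbq : dist b q = r := hqd.symm
  have hqB : q ∈ closure B := by
    have h1 : q ∈ closedBall b r := by rw [mem_closedBall, dist_comm, hdbq]
    have h2 := closure_mono hballB
    rw [closure_ball b (ne_of_gt hrpos)] at h2
    exact h2 h1
  have hqD : q ∈ D := by
    apply hballD
    rw [mem_ball]
    have h2 : dist q p ≤ dist q b + dist b p := dist_triangle q b p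
    have h3 : dist q b = r := by rw [dist_comm, hdbq]
    have h4 : dist b p < ε₀/4 := by rwa [dist_comm]
    linarith
  have hqA' : q ∈ A := hsub q hqA hqB hqD
  obtain ⟨εq, hεq, hPq⟩ := hP q hqA'
  set ρ := min r (εq/2) with hρ
  have hρpos : 0 < ρ := lt_min hrpos (by positivity)
  have hρr : ρ ≤ r := min_le_left _ _
  have hρε : ρ ≤ εq/2 := min_le_right _ _
  set c := q + (ρ/r) • (b - q) with hc
  have hnbq : ‖b - q‖ = r := by rw [← dist_eq_norm, hdbq]
  have hcq : dist c q = ρ := by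
    have : c - q = (ρ/r) • (b - q) := by rw [hc]; module
    rw [dist_eq_norm, this, norm_smul, hnbq, Real.norm_eq_abs,
      abs_of_pos (by positivity), div_mul_cancel₀ _ (ne_of_gt hrpos)]
  have hcb : dist c b = r - ρ := by
    have h1 : c - b = (1 - ρ/r) • (q - b) := by
      rw [hc]; module
    have h2 : ‖q - b‖ = r := by rw [norm_sub_rev, hnbq]
    rw [dist_eq_norm, h1, norm_smul, h2, Real.norm_eq_abs,
      abs_of_nonneg (by rw [sub_nonneg]; exact div_le_one_of_le₀ hρr (le_of_lt hrpos)),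
      sub_mul, one_mul, div_mul_cancel₀ _ (ne_of_gt hrpos)]
  have hOb : ball c ρ ⊆ ball b r := by
    intro y hy
    rw [mem_ball] at hy ⊢
    have := dist_triangle y c b
    linarith [hcb ▸ this]
  have hOq : ball c ρ ⊆ ball q εq := by
    intro y hy
    rw [mem_ball] at hy ⊢
    have := dist_triangle y c q
    rw [hcq] at this
    linarith
  have hqclO : q ∈ closure (ball c ρ) := by
    rw [closure_ball c (ne_of_gt hρpos), mem_closedBall, dist_comm, hcq]
  obtain ⟨y, hyO, hyA⟩ := hPq (ball c ρ) isOpen_ball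
    ((convex_ball c ρ).isConnected (nonempty_ball.2 hρpos)) hOq hqclO
  exact hdisj y hyA (hballB (hOb hyO))

theorem stmt9 {n : ℕ} {Y : Type*} [TopologicalSpace Y] [T1Space Y]
    (f : EuclideanSpace ℝ (Fin n) → Y)
    (hmeas : ∀ V : Set Y, IsOpen V → IsFsigma (f ⁻¹' V))
    (hwG : ∀ U : Set (EuclideanSpace ℝ (Fin n)), IsOpen U → IsConnected U →
      f '' closure U ⊆ closure (f '' U)) :
    IsConnected {p : EuclideanSpace ℝ (Fin n) × Y | p.2 = f p.1} := by
  constructor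
  · exact ⟨(0, f 0), rfl⟩
  intro u v hu hv hcov hne1 hne2
  by_contra hcon
  rw [Set.not_nonempty_iff_eq_empty] at hcon
  set A : Set (EuclideanSpace ℝ (Fin n)) := {x | (x, f x) ∈ u} with hA
  set B : Set (EuclideanSpace ℝ (Fin n)) := {x | (x, f x) ∈ v} with hB
  have hcover : ∀ x, x ∈ A ∨ x ∈ B := fun x => hcov (show (x, f x) ∈ _ from rfl)
  have hdisj : ∀ x, x ∈ A → x ∈ B → False := fun x hxA hxB => by
    have : (x, f x) ∈ {p : EuclideanSpace ℝ (Fin n) × Y | p.2 = f p.1} ∩ (u ∩ v) :=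
      ⟨rfl, hxA, hxB⟩
    rw [hcon] at this
    exact this
  have hAne : A.Nonempty := by
    obtain ⟨⟨x, y⟩, hxy, hxu⟩ := hne1
    rw [mem_setOf_eq] at hxy
    change y = f x at hxy
    subst hxy
    exact ⟨x, hxu⟩
  have hBne : B.Nonempty := by
    obtain ⟨⟨x, y⟩, hxy, hxv⟩ := hne2
    rw [mem_setOf_eq] at hxy
    change y = f x at hxy
    subst hxy
    exact ⟨x, hxv⟩
  -- the weak-Gibson-derived property
  have hPgen : ∀ w : Set (EuclideanSpace ℝ (Fin n) × Y), IsOpen w →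
      ∀ x ∈ {x | (x, f x) ∈ w}, ∃ ε > 0, ∀ O : Set (EuclideanSpace ℝ (Fin n)),
        IsOpen O → IsConnected O → O ⊆ ball x ε → x ∈ closure O →
        (O ∩ {x | (x, f x) ∈ w}).Nonempty := by
    intro w hw x hx
    obtain ⟨W, V', hW, hV', hxW, hfxV', hsub⟩ := isOpen_prod_iff.1 hw x (f x) hx
    obtain ⟨ε, hε, hball⟩ := Metric.isOpen_iff.1 hW x hxW
    refine ⟨ε, hε, fun O hO hOconn hOball hxcl => ?_⟩
    have h1 : f x ∈ closure (f '' O) := hwG O hO hOconn ⟨x, hxcl, rfl⟩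
    obtain ⟨z, hzV, hzim⟩ := _root_.mem_closure_iff.1 h1 V' hV' hfxV'
    obtain ⟨y, hyO, rfl⟩ := hzim
    exact ⟨y, hyO, hsub ⟨hball (hOball hyO), hzV⟩⟩
  -- T := common boundary
  set T : Set (EuclideanSpace ℝ (Fin n)) := closure A ∩ closure B with hT
  have hTne : T.Nonempty := by
    by_contra hTe
    rw [Set.not_nonempty_iff_eq_empty] at hTe
    have hmemT : ∀ x : EuclideanSpace ℝ (Fin n), x ∈ closure A → x ∈ closure B → False := by
      intro x h1 h2
      have : x ∈ T := ⟨h1, h2⟩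
      rw [hTe] at this
      exact this
    have h1 : closure A = (closure B)ᶜ := by
      ext x
      constructor
      · exact fun h1 h2 => hmemT x h1 h2
      · intro h
        rcases hcover x with h' | h'
        · exact subset_closure h'
        · exact absurd (subset_closure h') h
    haveI : PreconnectedSpace (EuclideanSpace ℝ (Fin n)) :=
      ⟨((convex_univ : Convex ℝ (univ : Set (EuclideanSpace ℝ (Fin n)))).isConnected
        ⟨0, trivial⟩).isPreconnected⟩
    have hclop : IsClopen (closure A) := ⟨isClosed_closure, by
      rw [h1]; exact isClosed_closure.isOpen_compl⟩
    rcases isClopen_iff.1 hclop with h | h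
    · exact absurd (subset_closure hAne.choose_spec) (by rw [h]; exact notMem_empty _)
    · exact hmemT hBne.choose (by rw [h]; trivial) (subset_closure hBne.choose_spec)
  have hTclosed : IsClosed T := isClosed_closure.inter isClosed_closure
  haveI : Nonempty T := hTne.to_subtype
  haveI : CompleteSpace T := hTclosed.completeSpace_coe
  obtain ⟨FA, hFAcl, hFAeq⟩ := fsigma_pre f hmeas u hu
  obtain ⟨FB, hFBcl, hFBeq⟩ := fsigma_pre f hmeas v hv
  set C : ℕ ⊕ ℕ → Set T := Sum.elim (fun k => Subtype.val ⁻¹' FA k)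
    (fun k => Subtype.val ⁻¹' FB k) with hC
  have hCcl : ∀ i, IsClosed (C i) := by
    rintro (k | k)
    · exact (hFAcl k).preimage continuous_subtype_val
    · exact (hFBcl k).preimage continuous_subtype_val
  have hCcov : ⋃ i, C i = univ := by
    rw [eq_univ_iff_forall]
    rintro ⟨x, hx⟩
    rcases hcover x with h | h
    · rw [hA, hFAeq] at h
      obtain ⟨k, hk⟩ := mem_iUnion.1 h
      exact mem_iUnion.2 ⟨Sum.inl k, hk⟩
    · rw [hB, hFBeq] at h
      obtain ⟨k, hk⟩ := mem_iUnion.1 h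
      exact mem_iUnion.2 ⟨Sum.inr k, hk⟩
  obtain ⟨i, t, hti⟩ := nonempty_interior_of_iUnion_of_closed hCcl hCcov
  have hti' : C i ∈ nhds t := mem_interior_iff_mem_nhds.1 hti
  obtain ⟨Dnb, hDnb, hDsub⟩ := (mem_nhds_induced Subtype.val t (C i)).1 hti'
  set D := interior Dnb with hD
  have hDopen : IsOpen D := isOpen_interior
  have hpD : (t : EuclideanSpace ℝ (Fin n)) ∈ D := mem_interior_iff_mem_nhds.2 hDnb
  have htA : (t : EuclideanSpace ℝ (Fin n)) ∈ closure A := t.2.1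
  have htB : (t : EuclideanSpace ℝ (Fin n)) ∈ closure B := t.2.2
  rcases i with k | k
  · -- T ∩ D ⊆ A
    refine geoLemma hcover hdisj (hPgen u hu) hDopen hpD htA htB fun x hxA hxB hxD => ?_
    have : (⟨x, hxA, hxB⟩ : T) ∈ C (Sum.inl k) := hDsub (mem_preimage.mpr (interior_subset hxD))
    rw [hA, hFAeq]
    exact mem_iUnion.2 ⟨k, this⟩
  · refine geoLemma (fun x => (hcover x).symm) (fun x h1 h2 => hdisj x h2 h1)
      (hPgen v hv) hDopen hpD htB htA fun x hxB hxA hxD => ?_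
    have : (⟨x, hxA, hxB⟩ : T) ∈ C (Sum.inr k) := hDsub (mem_preimage.mpr (interior_subset hxD))
    rw [hB, hFBeq]
    exact mem_iUnion.2 ⟨k, this⟩
end

section
/- Every weakly Gibson function f : ℝ → ℝ induces a weakly Gibson mapping γ_f : ℝ → ℝ², γ_f(x) = (x, f(x)). -/
theorem stmt10 (f : ℝ → ℝ)
    (hwG : ∀ U : Set ℝ, IsOpen U → IsConnected U → f '' closure U ⊆ closure (f '' U)) :
    ∀ U : Set ℝ, IsOpen U → IsConnected U →
      (fun x => (x, f x)) '' closure U ⊆ closure ((fun x => (x, f x)) '' U) := by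
  intro U hU hconn
  rintro _ ⟨a, ha, rfl⟩
  rw [Metric.mem_closure_iff]
  intro ε hε
  set V := U ∩ Metric.ball a ε with hV
  have hVopen : IsOpen V := hU.inter Metric.isOpen_ball
  have hVne : V.Nonempty := by
    rcases Metric.mem_closure_iff.mp ha ε hε with ⟨b, hb, hdb⟩
    exact ⟨b, hb, by rwa [Metric.mem_ball, dist_comm]⟩
  have hVconn : IsConnected V :=
    ⟨hVne, (hconn.isPreconnected.ordConnected.inter
      (convex_ball a ε).ordConnected).isPreconnected⟩
  have haV : a ∈ closure V := by
    rw [Metric.mem_closure_iff] at ha ⊢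
    intro δ hδ
    rcases ha (min δ ε) (lt_min hδ hε) with ⟨b, hb, hdb⟩
    refine ⟨b, ⟨hb, ?_⟩, hdb.trans_le (min_le_left _ _)⟩
    rw [Metric.mem_ball, dist_comm]
    exact hdb.trans_le (min_le_right _ _)
  have hfa : f a ∈ closure (f '' V) := hwG V hVopen hVconn ⟨a, haV, rfl⟩
  rcases Metric.mem_closure_iff.mp hfa ε hε with ⟨y, ⟨x, hxV, rfl⟩, hdy⟩
  refine ⟨(x, f x), ⟨x, hxV.1, rfl⟩, ?_⟩
  rw [Prod.dist_eq]
  exact max_lt (by rw [dist_comm]; exact hxV.2) hdy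
end

section
/- The function f : ℝ² → ℝ defined by f(x,y) = sin(1/x) if x > 0 and f(x,y) = 1 if x ≤ 0 is weakly Gibson, i.e., for every open connected set U ⊆ ℝ², f(closure(U)) ⊆ closure(f(U)). -/
open Real Set

theorem stmt11 (f : ℝ × ℝ → ℝ)
    (hf : ∀ p : ℝ × ℝ, f p = if p.1 > 0 then Real.sin (1 / p.1) else 1) :
    ∀ U : Set (ℝ × ℝ), IsOpen U → IsConnected U → f '' closure U ⊆ closure (f '' U) := by
  intro U hU hconn
  rintro _ ⟨p, hp, rfl⟩
  by_cases hpU : p ∈ U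
  · exact subset_closure ⟨p, hpU, rfl⟩
  rcases lt_trichotomy p.1 0 with h1 | h1 | h1
  · -- p.1 < 0 : f locally constant 1, continuous at p
    have hev : (fun _ : ℝ × ℝ => (1:ℝ)) =ᶠ[nhds p] f := by
      have hmem : {q : ℝ × ℝ | q.1 < 0} ∈ nhds p :=
        (isOpen_lt continuous_fst continuous_const).mem_nhds h1
      filter_upwards [hmem] with q hq
      rw [hf q, if_neg (not_lt.2 hq.le)]
    have hcont : ContinuousAt f p := continuousAt_const.congr hev
    exact hcont.continuousWithinAt.mem_closure_image hp
  · -- p.1 = 0 : f p = 1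
    have hfp : f p = 1 := by rw [hf p, if_neg (by rw [h1]; exact lt_irrefl 0)]
    by_cases hneg : ∃ q ∈ U, q.1 ≤ 0
    · obtain ⟨q, hqU, hq⟩ := hneg
      refine subset_closure ⟨q, hqU, ?_⟩
      rw [hf q, if_neg (not_lt.2 hq), hfp]
    · push_neg at hneg
      -- all points of U have positive first coordinate
      obtain ⟨u, huU⟩ := hconn.nonempty
      have ha : 0 < u.1 := hneg u huU
      set n : ℕ := ⌈1 / u.1⌉₊ with hn
      set c : ℝ := Real.pi / 2 + n * (2 * Real.pi) with hc
      have hπ := Real.pi_pos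
      have hcpos : 0 < c := by positivity
      set x₀ : ℝ := 1 / c with hx0
      have hx0pos : 0 < x₀ := by positivity
      have hx0a : x₀ ≤ u.1 := by
        rw [hx0, div_le_iff₀ hcpos]
        have hnc : (n:ℝ) ≤ c := by
          rw [hc]
          have h21 : (n:ℝ) * 1 ≤ (n:ℝ) * (2 * Real.pi) := by
            apply mul_le_mul_of_nonneg_left _ (Nat.cast_nonneg n)
            linarith [Real.pi_gt_three]
          have := Real.pi_pos
          linarith
        have h1a : 1 / u.1 ≤ (n:ℝ) := Nat.le_ceil _
        have hcc : 1 / u.1 ≤ c := le_trans h1a hnc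
        calc (1:ℝ) = u.1 * (1 / u.1) := by field_simp
        _ ≤ u.1 * c := mul_le_mul_of_nonneg_left hcc ha.le
      -- find q ∈ U with q.1 < x₀
      have hmem : Metric.ball p x₀ ∈ nhds p := Metric.ball_mem_nhds p hx0pos
      obtain ⟨q, hqb, hqU⟩ := mem_closure_iff_nhds.1 hp _ hmem
      have hq1 : q.1 < x₀ := by
        have : dist q p < x₀ := Metric.mem_ball.1 hqb
        have h2 : dist q.1 p.1 < x₀ := lt_of_le_of_lt (by rw [Prod.dist_eq]; exact le_max_left _ _) this
        have := (abs_lt.1 (by simpa [Real.dist_eq] using h2)).2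
        rw [h1] at this; linarith
      -- the projection of U is ord-connected
      have hIconn : IsPreconnected (Prod.fst '' U) :=
        hconn.isPreconnected.image _ continuous_fst.continuousOn
      have hOC : OrdConnected (Prod.fst '' U) := hIconn.ordConnected
      have hx0I : x₀ ∈ Prod.fst '' U := by
        have hq1I : q.1 ∈ Prod.fst '' U := ⟨q, hqU, rfl⟩
        have haI : u.1 ∈ Prod.fst '' U := ⟨u, huU, rfl⟩
        exact hOC.out hq1I haI ⟨hq1.le, hx0a⟩
      obtain ⟨w, hwU, hw1⟩ := hx0I
      refine subset_closure ⟨w, hwU, ?_⟩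
      rw [hf w, if_pos (by rw [hw1]; exact hx0pos), hw1, hfp, hx0]
      rw [one_div_one_div, hc, Real.sin_add_nat_mul_two_pi, Real.sin_pi_div_two]
  · -- p.1 > 0 : f continuous at p
    have hev : (fun q : ℝ × ℝ => Real.sin (1 / q.1)) =ᶠ[nhds p] f := by
      have hmem : {q : ℝ × ℝ | 0 < q.1} ∈ nhds p :=
        (isOpen_lt continuous_const continuous_fst).mem_nhds h1
      filter_upwards [hmem] with q hq
      rw [hf q, if_pos hq]
    have hcont0 : ContinuousAt (fun q : ℝ × ℝ => Real.sin (1 / q.1)) p :=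
      Real.continuous_sin.continuousAt.comp (continuousAt_const.div continuousAt_fst h1.ne')
    have hcont : ContinuousAt f p := hcont0.congr hev
    exact hcont.continuousWithinAt.mem_closure_image hp
end

section
/- For the function f : ℝ² → ℝ with f(x,y) = sin(1/x) for x > 0 and f(x,y) = 1 for x ≤ 0, let U = {(x,y) : x > 0 and |y − sin(1/x)| < x} and C = U ∪ {(0,0)}. Then the image γ_f(C) ⊆ ℝ³, where γ_f(p) = (p, f(p)), is not connected; consequently γ_f is not weakly Gibson. -/
open Set

theorem stmt13 (f : ℝ × ℝ → ℝ)
    (hf : ∀ p : ℝ × ℝ, f p = if p.1 > 0 then Real.sin (1 / p.1) else 1)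
    (U : Set (ℝ × ℝ))
    (hU : U = {p : ℝ × ℝ | p.1 > 0 ∧ |p.2 - Real.sin (1 / p.1)| < p.1})
    (C : Set (ℝ × ℝ)) (hC : C = U ∪ {(0, 0)}) :
    ¬ IsConnected ((fun p => (p, f p)) '' C) ∧
    ¬ (∀ V : Set (ℝ × ℝ), IsOpen V → IsConnected V →
        (fun p => (p, f p)) '' closure V ⊆ closure ((fun p => (p, f p)) '' V)) := by
  set γ : ℝ × ℝ → (ℝ × ℝ) × ℝ := fun p => (p, f p) with hγ
  set q : (ℝ × ℝ) × ℝ := ((0, 0), 1) with hq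
  set W : Set ((ℝ × ℝ) × ℝ) := {w | |w.1.1| < |w.1.2 - w.2|} with hW
  have hWopen : IsOpen W := by
    apply isOpen_lt <;> fun_prop
  have hqW : q ∈ W := by
    simp [hW, hq]
  have hγq : γ (0, 0) = q := by
    simp [hγ, hq, hf]
  have hfU : ∀ p ∈ U, f p = Real.sin (1 / p.1) := by
    intro p hp
    rw [hU] at hp
    simp [hf, hp.1]
  have hdisj : ∀ p ∈ U, γ p ∉ W := by
    intro p hp hmem
    have h2 := hp
    rw [hU] at h2
    simp only [hW, hγ, mem_setOf_eq] at hmem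
    rw [hfU p hp] at hmem
    have : |p.1| = p.1 := abs_of_pos h2.1
    linarith [h2.2, hmem, this.ge, this.le]
  -- openness of U
  have hUopen : IsOpen U := by
    have : U = {p : ℝ × ℝ | 0 < p.1} ∩
        (fun p : ℝ × ℝ => |p.2 - Real.sin (1 / p.1)| - p.1) ⁻¹' Iio 0 := by
      rw [hU]; ext p; simp [sub_neg]
    rw [this]
    apply ContinuousOn.isOpen_inter_preimage _ (isOpen_lt continuous_const continuous_fst)
      isOpen_Iio
    have h1 : ContinuousOn (fun p : ℝ × ℝ => Real.sin (1 / p.1)) {p : ℝ × ℝ | 0 < p.1} :=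
      Real.continuous_sin.comp_continuousOn
        (continuousOn_const.div continuous_fst.continuousOn (fun p hp => ne_of_gt hp))
    exact ((continuous_snd.continuousOn.sub h1).abs).sub continuous_fst.continuousOn
  -- connectedness of U
  have hUconn : IsConnected U := by
    have himg : U = (fun r : ℝ × ℝ => (r.1, Real.sin (1 / r.1) + r.2 * r.1)) ''
        (Ioi (0:ℝ) ×ˢ Ioo (-1:ℝ) 1) := by
      rw [hU]; ext ⟨x, y⟩
      simp only [mem_setOf_eq, mem_image, mem_prod, mem_Ioi, mem_Ioo, Prod.exists]
      constructor
      · rintro ⟨hx, hy⟩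
        refine ⟨x, (y - Real.sin (1 / x)) / x, ⟨hx, ?_, ?_⟩, ?_⟩
        · rw [lt_div_iff₀ hx]; rw [abs_lt] at hy; linarith [hy.1]
        · rw [div_lt_iff₀ hx]; rw [abs_lt] at hy; linarith [hy.2]
        · simp [div_mul_cancel₀ _ (ne_of_gt hx)]
      · rintro ⟨a, t, ⟨ha, ht1, ht2⟩, heq⟩
        obtain ⟨h1, h2⟩ := Prod.mk.injEq .. ▸ heq
        subst h1
        refine ⟨ha, ?_⟩
        rw [← h2]
        have habs : |t * a| = |t| * a := by rw [abs_mul, abs_of_pos ha]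
        rw [add_sub_cancel_left, habs]
        calc |t| * a < 1 * a := by
              apply mul_lt_mul_of_pos_right _ ha
              rw [abs_lt]; exact ⟨ht1, ht2⟩
          _ = a := one_mul a
    rw [himg]
    apply IsConnected.image (isConnected_Ioi.prod (isConnected_Ioo (by norm_num)))
    apply ContinuousOn.prodMk continuous_fst.continuousOn
    apply ContinuousOn.add _ (continuous_snd.continuousOn.mul continuous_fst.continuousOn)
    exact Real.continuous_sin.comp_continuousOn
      (continuousOn_const.div continuous_fst.continuousOn
        (fun p hp => ne_of_gt (mem_Ioi.mp hp.1)))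
  -- (0,0) in closure U
  have h0cl : ((0:ℝ), (0:ℝ)) ∈ closure U := by
    have hmem : ∀ n : ℕ, ((1 : ℝ) / (((n:ℝ) + 1) * Real.pi), (0:ℝ)) ∈ U := by
      intro n
      rw [hU]
      have hpos : (0:ℝ) < ((n:ℝ) + 1) * Real.pi :=
        mul_pos (by positivity) Real.pi_pos
      constructor
      · exact div_pos one_pos hpos
      · have hc : ((n:ℝ) + 1) = ((n + 1 : ℕ) : ℝ) := by push_cast; ring
        have hs : Real.sin (1 / ((1:ℝ) / (((n:ℝ) + 1) * Real.pi))) = 0 := by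
          rw [one_div_one_div, hc, Real.sin_nat_mul_pi]
        rw [hs]
        simpa using div_pos one_pos hpos
    have h1 : Filter.Tendsto (fun n : ℕ => (n:ℝ) + 1) Filter.atTop Filter.atTop :=
      Filter.tendsto_atTop_add_const_right _ 1 tendsto_natCast_atTop_atTop
    have h2 : Filter.Tendsto (fun n : ℕ => ((n:ℝ) + 1) * Real.pi) Filter.atTop Filter.atTop :=
      h1.atTop_mul_const Real.pi_pos
    have h3 : Filter.Tendsto (fun n : ℕ => (1:ℝ) / (((n:ℝ) + 1) * Real.pi))
        Filter.atTop (nhds 0) := by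
      have h3' : Filter.Tendsto (fun n : ℕ => (((n:ℝ) + 1) * Real.pi)⁻¹)
          Filter.atTop (nhds 0) := h2.inv_tendsto_atTop
      simpa [one_div] using h3' 
    exact mem_closure_of_tendsto (h3.prodMk_nhds tendsto_const_nhds)
      (Filter.Eventually.of_forall hmem)
  -- a point of U
  have h10 : ((1:ℝ), (0:ℝ)) ∈ U := by
    rw [hU]
    refine ⟨one_pos, ?_⟩
    have hs1 : Real.sin 1 < 1 := by simpa using Real.sin_lt one_pos
    have hs0 : 0 < Real.sin 1 :=
      Real.sin_pos_of_pos_of_lt_pi one_pos (by linarith [Real.pi_gt_three])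
    have key : |(0:ℝ) - Real.sin 1| < 1 := by
      rw [zero_sub, abs_neg, abs_of_pos hs0]; exact hs1
    simpa using key
  constructor
  · rintro ⟨-, hpre⟩
    have hcov : γ '' C ⊆ W ∪ {z | z ≠ q} := by
      rintro z ⟨p, hp, rfl⟩
      rw [hC] at hp
      rcases hp with hp | hp
      · right
        intro hzq
        have : p.1 = 0 := by
          have := congrArg (fun w => w.1.1) hzq
          simpa [hγ, hq] using this
        rw [hU] at hp
        exact absurd this (ne_of_gt hp.1)
      · left
        simp only [mem_singleton_iff] at hp
        rw [hp, hγq]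
        exact hqW
    have hqC : q ∈ γ '' C := ⟨(0, 0), by rw [hC]; exact Or.inr rfl, hγq⟩
    have hne1 : (γ '' C ∩ W).Nonempty := ⟨q, hqC, hqW⟩
    have hne2 : (γ '' C ∩ {z | z ≠ q}).Nonempty := by
      refine ⟨γ (1, 0), ⟨(1, 0), by rw [hC]; exact Or.inl h10, rfl⟩, ?_⟩
      intro hzq
      have := congrArg (fun w => w.1.1) hzq
      simp [hγ, hq] at this
    obtain ⟨z, hzC, hzW, hzq⟩ := hpre W {z | z ≠ q} hWopen isOpen_ne hcov hne1 hne2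
    obtain ⟨p, hp, rfl⟩ := hzC
    rw [hC] at hp
    rcases hp with hp | hp
    · exact hdisj p hp hzW
    · simp only [mem_singleton_iff] at hp
      rw [hp, hγq] at hzq
      exact hzq rfl
  · intro h
    have hsub := h U hUopen hUconn
    have hqcl : q ∈ closure (γ '' U) := by
      have : γ (0, 0) ∈ γ '' closure U := ⟨(0, 0), h0cl, rfl⟩
      rw [hγq] at this
      exact hsub this
    obtain ⟨z, hzW, p, hp, rfl⟩ := (_root_.mem_closure_iff.mp hqcl) W hWopen hqW
    exact hdisj p hp hzW
end

section
/- Let g : ℝ → ℝ be defined by g(x) = Σ_{n=1}^∞ 2^{-n} φ_n(x), where {r_n} is an enumeration of ℚ and φ_n(x) = sin(1/(x − r_n)) for x ≠ r_n and φ_n(r_n) = 0. Then g is a Baire-one function with the Darboux (intermediate value) property. -/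
/-!
Since `(x² cos(1/x))' = 2x cos(1/x) + sin(1/x)` for `x ≠ 0` and `2x cos(1/x)` extends
continuously by `0` at `0`, the function `x² cos(1/x) - ∫₀ˣ 2t cos(1/t) dt` has derivative
`sin(1/x)`, with value `0` at `0`. The terms of `g` are therefore derivatives bounded by `2⁻ⁿ⁻¹`,
so `g` is the derivative of the corresponding series of primitives. A derivative is a pointwise
limit of continuous difference quotients, and it has the intermediate value property by
Darboux's theorem.
-/

open Real Filter Set Topology

theorem exists_continuous_tendsto_of_hasDerivAt {f f' : ℝ → ℝ}
    (hf : ∀ x, HasDerivAt f (f' x) x) :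
    ∃ h : ℕ → ℝ → ℝ, (∀ n, Continuous (h n)) ∧ ∀ x, Tendsto (fun n => h n x) atTop (𝓝 (f' x)) := by
  have hfc : Continuous f := continuous_iff_continuousAt.2 fun x => (hf x).continuousAt
  have ht : Tendsto (fun k : ℕ => 1 / ((k : ℝ) + 1)) atTop (𝓝[≠] 0) :=
    tendsto_nhdsWithin_of_tendsto_nhds_of_eventually_within _
      tendsto_one_div_add_atTop_nhds_zero_nat
      (Eventually.of_forall fun k => one_div_ne_zero k.cast_add_one_ne_zero)
  refine ⟨fun k x => (1 / ((k : ℝ) + 1))⁻¹ * (f (x + 1 / ((k : ℝ) + 1)) - f x),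
    fun k => by fun_prop, fun x => ?_⟩
  exact (hasDerivAt_iff_tendsto_slope_zero.1 (hf x)).comp ht

theorem IsPreconnected.image_of_hasDerivAt {f f' : ℝ → ℝ} {C : Set ℝ} (hC : IsPreconnected C)
    (hf : ∀ x ∈ C, HasDerivAt f (f' x) x) : IsPreconnected (f' '' C) := by
  rw [isPreconnected_iff_ordConnected] at hC ⊢
  exact hC.image_hasDerivWithinAt fun x hx => (hf x hx).hasDerivWithinAt

theorem norm_mul_cos_le (x y : ℝ) : ‖x * cos y‖ ≤ ‖x‖ := by
  simpa [norm_mul] using mul_le_of_le_one_right (norm_nonneg x) (abs_cos_le_one y)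

theorem continuous_mul_cos_inv : Continuous fun x : ℝ => x * cos x⁻¹ := by
  refine continuous_iff_continuousAt.2 fun x => ?_
  rcases eq_or_ne x 0 with rfl | hx
  · simpa [ContinuousAt] using squeeze_zero_norm (fun y => norm_mul_cos_le y y⁻¹) tendsto_norm_zero
  · exact continuousAt_id.mul (continuous_cos.continuousAt.comp (continuousAt_inv₀ hx))

noncomputable def sinInv (x : ℝ) : ℝ := if x = 0 then 0 else sin (1 / x)

theorem abs_sinInv_le_one (x : ℝ) : |sinInv x| ≤ 1 := by
  unfold sinInv
  split_ifs <;> simp [abs_sin_le_one]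

theorem hasDerivAt_sq_mul_cos_inv (x : ℝ) :
    HasDerivAt (fun x : ℝ => x ^ 2 * cos x⁻¹) (2 * (x * cos x⁻¹) + sinInv x) x := by
  rcases eq_or_ne x 0 with rfl | hx
  · simp only [sinInv, if_pos, mul_zero, zero_mul, add_zero]
    rw [hasDerivAt_iff_tendsto_slope_zero]
    have := continuous_mul_cos_inv.tendsto 0 |>.mono_left (nhdsWithin_le_nhds (s := {0}ᶜ))
    refine (this.congr' (eventually_nhdsWithin_of_forall fun t (ht : t ≠ 0) => ?_)).trans (by simp)
    simp only [zero_add, smul_eq_mul, ne_eq, OfNat.ofNat_ne_zero, not_false_eq_true, zero_pow,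
      zero_mul, sub_zero]
    rw [pow_two, mul_assoc, inv_mul_cancel_left₀ ht]
  · refine ((hasDerivAt_pow 2 x).mul (hasDerivAt_inv hx).cos).congr_deriv ?_
    simp only [sinInv, if_neg hx, one_div]
    field_simp
    ring

noncomputable def sinInvPrimitive (x : ℝ) : ℝ :=
  x ^ 2 * cos x⁻¹ - ∫ t in (0 : ℝ)..x, 2 * (t * cos t⁻¹)

theorem hasDerivAt_sinInvPrimitive (x : ℝ) : HasDerivAt sinInvPrimitive (sinInv x) x := by
  have hint : HasDerivAt (fun y => ∫ t in (0 : ℝ)..y, 2 * (t * cos t⁻¹)) (2 * (x * cos x⁻¹)) x :=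
    ((continuous_const.mul continuous_mul_cos_inv).integral_hasStrictDerivAt 0 x).hasDerivAt
  exact ((hasDerivAt_sq_mul_cos_inv x).sub hint).congr_deriv (by ring)

theorem exists_hasDerivAt_tsum_mul_sinInv {c : ℕ → ℝ} (hc : Summable c) (q : ℕ → ℝ) :
    ∃ F : ℝ → ℝ, ∀ x, HasDerivAt F (∑' n, c n * sinInv (x - q n)) x := by
  refine ⟨fun z => ∑' n, c n * (sinInvPrimitive (z - q n) - sinInvPrimitive (0 - q n)), fun x => ?_⟩
  refine hasDerivAt_tsum (g' := fun n y => c n * sinInv (y - q n)) (y₀ := 0) hc.abs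
    (fun n y => ?_) (fun n y => ?_) ?_ x
  · exact (((hasDerivAt_sinInvPrimitive (y - q n)).comp_sub_const y (q n)).sub_const _).const_mul _
  · simpa [abs_mul] using mul_le_of_le_one_right (abs_nonneg (c n)) (abs_sinInv_le_one _)
  · simpa only [sub_self, mul_zero] using summable_zero

theorem stmt14_general (r : ℕ → ℚ)
    (φ : ℕ → ℝ → ℝ)
    (hφ : ∀ n x, φ n x = if x = (r n : ℝ) then 0 else Real.sin (1 / (x - (r n : ℝ))))
    (g : ℝ → ℝ)
    (hg : ∀ x, g x = ∑' n : ℕ, (1 / 2 : ℝ) ^ (n + 1) * φ n x) :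
    (∃ h : ℕ → ℝ → ℝ, (∀ n, Continuous (h n)) ∧
        ∀ x, Filter.Tendsto (fun n => h n x) Filter.atTop (nhds (g x))) ∧
    (∀ C : Set ℝ, IsPreconnected C → IsPreconnected (g '' C)) := by
  have hφ' : ∀ n x, φ n x = sinInv (x - r n) := by
    intro n x
    simp [hφ, sinInv, sub_eq_zero]
  obtain ⟨F, hF⟩ := exists_hasDerivAt_tsum_mul_sinInv
    ((summable_nat_add_iff 1).2 summable_geometric_two) (fun n => (r n : ℝ))
  have hFg : ∀ x, HasDerivAt F (g x) x := by
    simpa only [hg, hφ'] using hF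
  exact ⟨exists_continuous_tendsto_of_hasDerivAt hFg,
    fun C hC => hC.image_of_hasDerivAt fun x _ => hFg x⟩

theorem stmt14 (r : ℕ → ℚ) (hr : Function.Bijective r)
    (φ : ℕ → ℝ → ℝ)
    (hφ : ∀ n x, φ n x = if x = (r n : ℝ) then 0 else Real.sin (1 / (x - (r n : ℝ))))
    (g : ℝ → ℝ)
    (hg : ∀ x, g x = ∑' n : ℕ, (1 / 2 : ℝ) ^ (n + 1) * φ n x) :
    (∃ h : ℕ → ℝ → ℝ, (∀ n, Continuous (h n)) ∧
        ∀ x, Filter.Tendsto (fun n => h n x) Filter.atTop (nhds (g x))) ∧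
    (∀ C : Set ℝ, IsPreconnected C → IsPreconnected (g '' C)) :=
  stmt14_general r φ hφ g hg
end
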